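/- arXiv:0709.0535 — 6 statements merged into one kernel-verified Lean document; each statement's English description precedes it below -/
import Mathlib

section
/- Let d, K, N be positive integers with K ≤ d and N ≥ 2, and let X_1, …, X_N ∈ ℂ^{d×K} be matrices with orthonormal columns (X_nᴴ X_n = I_K for each n). Then the squared chordal packing diameter satisfies min_{m ≠ n} (K − ‖X_mᴴ X_n‖_F²) ≤ (K(d − K)/d) · (N/(N − 1)). -/
open scoped Matrix

/-- The squared Frobenius norm of a complex matrix:
`‖A‖_F² = trace(AᴴA) = ∑ᵢⱼ |Aᵢⱼ|²`. -/
noncomputable def frobNormSq {m n : Type*} [Fintype m] [Fintype n]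
    (A : Matrix m n ℂ) : ℝ :=
  ∑ i, ∑ j, ‖A i j‖ ^ 2

/-!
Let `Pₙ = XₙXₙᴴ` be the orthogonal projections and `S = ∑ Pₙ`. Then `tr S = NK` and
`‖S‖_F² = ∑_{m,n} ‖XₘᴴXₙ‖_F²` (the frame potential), so Cauchy–Schwarz on the diagonal of `S`
gives `(NK)² ≤ d ‖S‖_F²`. The `N` diagonal terms of the frame potential equal `K`, hence the
off-diagonal overlaps `‖XₘᴴXₙ‖_F²` have mean at least `(NK²/d − K)/(N − 1)`, and some pair
`m ≠ n` attains at least the mean.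
-/

open Finset

theorem sum_offDiag_eq_sum_sub_sum_diag {ι M : Type*} [Fintype ι] [DecidableEq ι]
    [AddCommGroup M] (f : ι → ι → M) :
    ∑ p ∈ univ.offDiag, f p.1 p.2 = ∑ i, ∑ j, f i j - ∑ i, f i i := by
  rw [eq_sub_iff_add_eq, ← Fintype.sum_prod_type', ← univ_product_univ, ← diag_union_offDiag,
    sum_union (disjoint_diag_offDiag _), add_comm, diag]
  simp

theorem exists_ne_le_offDiag_average {ι : Type*} [Fintype ι] (hι : 2 ≤ Fintype.card ι)
    (f : ι → ι → ℝ) :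
    ∃ i j, i ≠ j ∧ f i j ≤
      (∑ i, ∑ j, f i j - ∑ i, f i i) / (Fintype.card ι * (Fintype.card ι - 1)) := by
  classical
  set N := Fintype.card ι
  have hcard : ((univ : Finset ι).offDiag.card : ℝ) = N * (N - 1) := by
    rw [offDiag_card, card_univ, Nat.cast_sub (Nat.le_mul_self N)]
    push_cast; ring
  have hpos : (0 : ℝ) < N * (N - 1) := by
    have : (2 : ℝ) ≤ N := by exact_mod_cast hι
    nlinarith
  obtain ⟨p, hp, hle⟩ := exists_le_of_sum_le (s := univ.offDiag) (f := fun p => f p.1 p.2)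
    (g := fun _ => (∑ i, ∑ j, f i j - ∑ i, f i i) / (N * (N - 1)))
    (by rw [← card_pos, ← Nat.cast_pos (α := ℝ), hcard]; exact hpos)
    (by rw [sum_const, nsmul_eq_mul, hcard, mul_div_cancel₀ _ hpos.ne',
          sum_offDiag_eq_sum_sub_sum_diag])
  exact ⟨p.1, p.2, (mem_offDiag.1 hp).2.2, hle⟩

section Frobenius

variable {m n : Type*} [Fintype m] [Fintype n]

theorem ofReal_frobNormSq (A : Matrix m n ℂ) : (frobNormSq A : ℂ) = (Aᴴ * A).trace := by
  simp only [frobNormSq, Matrix.trace, Matrix.diag, Matrix.mul_apply,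
    Matrix.conjTranspose_apply, Complex.ofReal_sum, Complex.ofReal_pow]
  rw [sum_comm]
  refine sum_congr rfl fun i _ => sum_congr rfl fun j _ => ?_
  rw [RCLike.star_def, Complex.conj_mul']

theorem ofReal_frobNormSq_conjTranspose_mul (A B : Matrix m n ℂ) :
    (frobNormSq (Aᴴ * B) : ℂ) = (A * Aᴴ * (B * Bᴴ)).trace := by
  rw [ofReal_frobNormSq, Matrix.conjTranspose_mul, Matrix.conjTranspose_conjTranspose,
    Matrix.mul_assoc, Matrix.trace_mul_comm]
  simp only [Matrix.mul_assoc]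

theorem re_trace_sq_le_card_mul_frobNormSq (A : Matrix n n ℂ) :
    A.trace.re ^ 2 ≤ Fintype.card n * frobNormSq A := by
  calc A.trace.re ^ 2 = (∑ i, (A i i).re) ^ 2 := by simp [Matrix.trace, Complex.re_sum]
    _ ≤ Fintype.card n * ∑ i, (A i i).re ^ 2 := by
      simpa using sq_sum_le_card_mul_sum_sq (s := univ) (f := fun i => (A i i).re)
    _ ≤ Fintype.card n * frobNormSq A := by
      gcongr
      refine sum_le_sum fun i _ => ?_
      calc (A i i).re ^ 2 ≤ ‖A i i‖ ^ 2 := by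
            rw [sq_le_sq, abs_norm]; exact Complex.abs_re_le_norm _
        _ ≤ ∑ j, ‖A i j‖ ^ 2 :=
          single_le_sum (f := fun j => ‖A i j‖ ^ 2) (fun j _ => by positivity) (mem_univ i)

theorem frobNormSq_eq_card_of_conjTranspose_mul_self_eq_one [DecidableEq n] {A : Matrix m n ℂ}
    (hA : Aᴴ * A = 1) : frobNormSq A = Fintype.card n := by
  exact_mod_cast (ofReal_frobNormSq A).trans (by rw [hA]; simp : _ = (Fintype.card n : ℂ))

theorem frobNormSq_one [DecidableEq n] : frobNormSq (1 : Matrix n n ℂ) = Fintype.card n :=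
  frobNormSq_eq_card_of_conjTranspose_mul_self_eq_one (by simp)

end Frobenius

section FramePotential

variable {ι m n : Type*} [Fintype ι] [Fintype m] [Fintype n]

noncomputable def framePotential (X : ι → Matrix m n ℂ) : ℝ :=
  ∑ i, ∑ j, frobNormSq ((X i)ᴴ * X j)

theorem framePotential_eq_frobNormSq_sum (X : ι → Matrix m n ℂ) :
    framePotential X = frobNormSq (∑ i, X i * (X i)ᴴ) := by
  apply Complex.ofReal_injective
  rw [ofReal_frobNormSq, Matrix.conjTranspose_sum, framePotential]
  simp only [Matrix.conjTranspose_mul, Matrix.conjTranspose_conjTranspose, sum_mul_sum,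
    Matrix.trace_sum, Complex.ofReal_sum, ofReal_frobNormSq_conjTranspose_mul]

theorem sq_sum_frobNormSq_le_card_mul_framePotential (X : ι → Matrix m n ℂ) :
    (∑ i, frobNormSq (X i)) ^ 2 ≤ Fintype.card m * framePotential X := by
  have htrace : (∑ i, X i * (X i)ᴴ).trace.re = ∑ i, frobNormSq (X i) := by
    simp only [Matrix.trace_sum, Complex.re_sum, Matrix.trace_mul_comm (X _), ← ofReal_frobNormSq,
      Complex.ofReal_re]
  rw [← htrace, framePotential_eq_frobNormSq_sum]
  exact re_trace_sq_le_card_mul_frobNormSq _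

end FramePotential

theorem rankin_bound_chordal_general (d K N : ℕ) (hd : 0 < d)
    (hN : 2 ≤ N) (X : Fin N → Matrix (Fin d) (Fin K) ℂ)
    (hX : ∀ n, (X n)ᴴ * X n = 1) :
    ∃ m n : Fin N, m ≠ n ∧
      (K : ℝ) - frobNormSq ((X m)ᴴ * X n) ≤
        ((K : ℝ) * ((d : ℝ) - K) / d) * ((N : ℝ) / ((N : ℝ) - 1)) := by
  obtain ⟨m, n, hmn, hle⟩ := exists_ne_le_offDiag_average (by simpa using hN)
    fun m n => (K : ℝ) - frobNormSq ((X m)ᴴ * X n)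
  refine ⟨m, n, hmn, hle.trans ?_⟩
  have hwelch : ((N : ℝ) * K) ^ 2 ≤ d * framePotential X := by
    simpa [frobNormSq_eq_card_of_conjTranspose_mul_self_eq_one (hX _), mul_comm] using
      sq_sum_frobNormSq_le_card_mul_framePotential X
  simp only [hX, frobNormSq_one, sub_self, sum_const_zero, sub_zero, sum_sub_distrib, sum_const,
    card_univ, Fintype.card_fin, nsmul_eq_mul]
  rw [← framePotential]
  have hN1 : (1 : ℝ) < N := by exact_mod_cast hN
  have hd0 : (d : ℝ) ≠ 0 := by positivity
  calc (N * (N * K) - framePotential X) / (N * (N - 1))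
      ≤ (N * (N * K) - (N * K) ^ 2 / d) / (N * (N - 1)) := by
        gcongr
        rwa [div_le_iff₀' (by positivity)]
    _ = K * (d - K) / d * (N / (N - 1)) := by
        field_simp

/-- **Rankin bound for the chordal distance** (Conway–Hardin–Sloane):
for `N ≥ 2` subspaces of `ℂ^d`, each of dimension `K`, represented by matrices with
orthonormal columns, the squared chordal packing diameter
`min_{m ≠ n} (K − ‖X_mᴴ X_n‖_F²)` is at most `(K(d−K)/d)·(N/(N−1))`. -/
theorem rankin_bound_chordal (d K N : ℕ) (hd : 0 < d) (hK : 0 < K) (hKd : K ≤ d)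
    (hN : 2 ≤ N) (X : Fin N → Matrix (Fin d) (Fin K) ℂ)
    (hX : ∀ n, (X n)ᴴ * X n = 1) :
    ∃ m n : Fin N, m ≠ n ∧
      (K : ℝ) - frobNormSq ((X m)ᴴ * X n) ≤
        ((K : ℝ) * ((d : ℝ) - K) / d) * ((N : ℝ) / ((N : ℝ) - 1)) :=
  rankin_bound_chordal_general d K N hd hN X hX
end

section
/- Let d, K, N be positive integers with K ≤ d and N ≥ 2, and let X_1, …, X_N ∈ ℂ^{d×K} be matrices with orthonormal columns (X_nᴴ X_n = I_K for each n). If K − ‖X_mᴴ X_n‖_F² ≥ (K(d − K)/d) · (N/(N − 1)) for all m ≠ n (i.e., the Rankin bound for the chordal distance is attained), then all pairs of subspaces are equidistant: ‖X_mᴴ X_n‖_F² = K − (K(d − K)/d) · (N/(N − 1)) for every pair m ≠ n. -/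
/-!
The frame operator `S = ∑ₙ Xₙ Xₙᴴ` has trace `NK` and `‖S‖_F² = ∑_{m,n} ‖Xₘᴴ Xₙ‖_F²`, so the
Cauchy–Schwarz inequality on the diagonal of `S` gives `(NK)² ≤ d ‖S‖_F²`. The `N` diagonal
terms equal `K`, so the `N(N-1)` off-diagonal terms sum to at least `N(N-1)` times the Rankin
value `K - (K(d-K)/d)(N/(N-1))`; as none of them exceeds it, all of them equal it.
-/

open scoped Matrix

open Finset

theorem Finset.sum_sum_eq_sum_add_sum_offDiag {ι M : Type*} [AddCommMonoid M] [DecidableEq ι]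
    (s : Finset ι) (f : ι → ι → M) :
    ∑ i ∈ s, ∑ j ∈ s, f i j = ∑ i ∈ s, f i i + ∑ p ∈ s.offDiag, f p.1 p.2 := by
  rw [← sum_product', ← diag_union_offDiag, sum_union (disjoint_diag_offDiag s), sum_diag]

theorem Finset.eq_of_forall_le_of_card_nsmul_le_sum {ι M : Type*} [AddCommMonoid M]
    [PartialOrder M] [IsOrderedCancelAddMonoid M] {s : Finset ι} {f : ι → M} {c : M}
    (hle : ∀ i ∈ s, f i ≤ c) (hsum : #s • c ≤ ∑ i ∈ s, f i) : ∀ i ∈ s, f i = c :=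
  (sum_eq_sum_iff_of_le hle).1 <| (sum_le_sum hle).antisymm <| by rwa [sum_const]

section Frobenius

variable {m n : Type*} [Fintype m] [Fintype n]

theorem frobNormSq_sum_mul_conjTranspose {ι : Type*} [Fintype ι] (X : ι → Matrix m n ℂ) :
    frobNormSq (∑ i, X i * (X i)ᴴ) = ∑ i, ∑ j, frobNormSq ((X i)ᴴ * X j) := by
  apply Complex.ofReal_injective
  simp only [Complex.ofReal_sum, ofReal_frobNormSq, Matrix.conjTranspose_sum,
    Matrix.conjTranspose_mul, Matrix.conjTranspose_conjTranspose, sum_mul_sum, Matrix.trace_sum]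
  refine sum_congr rfl fun i _ => sum_congr rfl fun j _ => ?_
  simp only [Matrix.mul_assoc]
  rw [Matrix.trace_mul_comm (X j)ᴴ]
  simp only [Matrix.mul_assoc]

theorem norm_trace_sq_le_card_mul_frobNormSq (A : Matrix n n ℂ) :
    ‖A.trace‖ ^ 2 ≤ Fintype.card n * frobNormSq A :=
  calc ‖A.trace‖ ^ 2 ≤ (∑ i, ‖A i i‖) ^ 2 := by
        gcongr; exact norm_sum_le _ _
    _ ≤ Fintype.card n * ∑ i, ‖A i i‖ ^ 2 := sq_sum_le_card_mul_sum_sq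
    _ ≤ Fintype.card n * frobNormSq A := by
        gcongr
        refine sum_le_sum fun i _ => ?_
        exact single_le_sum (f := fun j => ‖A i j‖ ^ 2) (fun _ _ => by positivity) (mem_univ i)

end Frobenius

theorem sq_card_mul_card_le_card_mul_sum_frobNormSq {ι m k : Type*} [Fintype ι] [Fintype m]
    [Fintype k] [DecidableEq k] (X : ι → Matrix m k ℂ) (hX : ∀ i, (X i)ᴴ * X i = 1) :
    ((Fintype.card ι : ℝ) * Fintype.card k) ^ 2 ≤
      Fintype.card m * ∑ i, ∑ j, frobNormSq ((X i)ᴴ * X j) := by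
  have htrace : (∑ i, X i * (X i)ᴴ).trace = (Fintype.card ι * Fintype.card k : ℕ) := by
    simp [Matrix.trace_sum, Matrix.trace_mul_comm (X _), hX]
  calc ((Fintype.card ι : ℝ) * Fintype.card k) ^ 2 = ‖(∑ i, X i * (X i)ᴴ).trace‖ ^ 2 := by
        rw [htrace, Complex.norm_natCast, Nat.cast_mul]
    _ ≤ _ := norm_trace_sq_le_card_mul_frobNormSq _
    _ = _ := by rw [frobNormSq_sum_mul_conjTranspose]

theorem rankin_bound_chordal_equality_equidistant_general (d K N : ℕ) (hd : 0 < d)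
    (hN : 2 ≤ N) (X : Fin N → Matrix (Fin d) (Fin K) ℂ)
    (hX : ∀ n, (X n)ᴴ * X n = 1)
    (hbound : ∀ m n : Fin N, m ≠ n →
      (K : ℝ) - frobNormSq ((X m)ᴴ * X n) ≥
        ((K : ℝ) * ((d : ℝ) - K) / d) * ((N : ℝ) / ((N : ℝ) - 1))) :
    ∀ m n : Fin N, m ≠ n →
      frobNormSq ((X m)ᴴ * X n) =
        (K : ℝ) - ((K : ℝ) * ((d : ℝ) - K) / d) * ((N : ℝ) / ((N : ℝ) - 1)) := by
  set c : ℝ := (K : ℝ) - ((K : ℝ) * ((d : ℝ) - K) / d) * ((N : ℝ) / ((N : ℝ) - 1))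
  have hle : ∀ p ∈ (univ : Finset (Fin N)).offDiag, frobNormSq ((X p.1)ᴴ * X p.2) ≤ c :=
    fun p hp => by linarith [hbound p.1 p.2 (mem_offDiag.1 hp).2.2]
  have hcard : (#(univ : Finset (Fin N)).offDiag : ℝ) = N * (N - 1) := by
    rw [offDiag_card, card_univ, Fintype.card_fin, Nat.cast_sub (Nat.le_mul_self N)]
    push_cast; ring
  have hgram := sq_card_mul_card_le_card_mul_sum_frobNormSq X hX
  simp only [Finset.sum_sum_eq_sum_add_sum_offDiag, hX, frobNormSq_one, sum_const, card_univ,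
    Fintype.card_fin, nsmul_eq_mul] at hgram
  have hsum : #(univ : Finset (Fin N)).offDiag • c ≤
      ∑ p ∈ (univ : Finset (Fin N)).offDiag, frobNormSq ((X p.1)ᴴ * X p.2) := by
    have hd' : (0 : ℝ) < d := by exact_mod_cast hd
    have hN' : (N : ℝ) - 1 ≠ 0 := by
      have : (2 : ℝ) ≤ N := by exact_mod_cast hN
      linarith
    have hc : (N : ℝ) * (N - 1) * c = (N * K) ^ 2 / d - N * K := by
      simp only [c]; field_simp; ring
    rw [nsmul_eq_mul, hcard, hc, sub_le_iff_le_add', div_le_iff₀ hd']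
    linarith
  intro m n hmn
  exact eq_of_forall_le_of_card_nsmul_le_sum hle hsum (m, n)
    (mem_offDiag.2 ⟨mem_univ m, mem_univ n, hmn⟩)

/-- If the Rankin bound for the chordal distance is attained by a configuration of `N`
subspaces of `ℂ^d` of dimension `K`, then all pairs of subspaces are equidistant:
`‖X_mᴴ X_n‖_F² = K − (K(d−K)/d)·(N/(N−1))` for every `m ≠ n`. -/
theorem rankin_bound_chordal_equality_equidistant (d K N : ℕ) (hd : 0 < d) (hK : 0 < K)
    (hKd : K ≤ d) (hN : 2 ≤ N) (X : Fin N → Matrix (Fin d) (Fin K) ℂ)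
    (hX : ∀ n, (X n)ᴴ * X n = 1)
    (hbound : ∀ m n : Fin N, m ≠ n →
      (K : ℝ) - frobNormSq ((X m)ᴴ * X n) ≥
        ((K : ℝ) * ((d : ℝ) - K) / d) * ((N : ℝ) / ((N : ℝ) - 1))) :
    ∀ m n : Fin N, m ≠ n →
      frobNormSq ((X m)ᴴ * X n) =
        (K : ℝ) - ((K : ℝ) * ((d : ℝ) - K) / d) * ((N : ℝ) / ((N : ℝ) - 1)) :=
  rankin_bound_chordal_equality_equidistant_general d K N hd hN X hX hbound
end

section
/- Let d, K, N be positive integers with K ≤ d, and let X_1, …, X_N ∈ ℝ^{d×K} be real matrices with orthonormal columns (X_nᵀ X_n = I_K for each n) representing an equi-isoclinic family: there exists c with 0 ≤ c < 1 such that (X_mᵀ X_n)ᵀ (X_mᵀ X_n) = c² · I_K for every pair m ≠ n. Then N ≤ d(d + 1)/2 − K(K + 1)/2 + 1. -/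
open Module Matrix

/-!
The projections `P n = X n * (X n)ᵀ` are symmetric `d × d` matrices whose trace Gram matrix
`trace (P m * P n)` equals `K` on the diagonal and `c² K` off it; as `c² < 1` they are linearly
independent, so they span an `N`-dimensional subspace `W` of the symmetric matrices. The
compression `S ↦ (X n₀)ᵀ * S * X n₀` maps the symmetric `d × d` matrices onto the symmetric
`K × K` matrices, so its kernel there has dimension `d(d+1)/2 - K(K+1)/2`; but it sends every
`P n` to a multiple of the identity, so `W` meets that kernel in codimension at most one.
-/

theorem LinearMap.linearIndependent_of_apply_eq_ite {𝕜 M ι : Type*} [Field 𝕜] [LinearOrder 𝕜]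
    [IsStrictOrderedRing 𝕜] [AddCommGroup M] [Module 𝕜 M] [Fintype ι] [DecidableEq ι]
    (B : M →ₗ[𝕜] M →ₗ[𝕜] 𝕜) {v : ι → M} {a b : 𝕜} (hb : 0 ≤ b) (hab : b < a)
    (hB : ∀ i j, B (v i) (v j) = if i = j then a else b) :
    LinearIndependent 𝕜 v := by
  rw [Fintype.linearIndependent_iff]
  intro g hg
  have hrow : ∀ i, (a - b) * g i + b * ∑ j, g j = 0 := by
    intro i
    have hsplit : ∀ j,
        g j * (if i = j then a else b) = b * g j + if i = j then (a - b) * g j else 0 := by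
      intro j
      split_ifs <;> ring
    have h := congrArg (B (v i)) hg
    simp only [map_sum, map_smul, hB, smul_eq_mul, map_zero, hsplit, Finset.sum_add_distrib,
      Finset.sum_ite_eq, Finset.mem_univ, if_true, ← Finset.mul_sum] at h
    linarith
  have hsum : ∑ j, g j = 0 := by
    have h := Finset.sum_congr rfl fun i (_ : i ∈ Finset.univ) => hrow i
    rw [Finset.sum_add_distrib, ← Finset.mul_sum, Finset.sum_const, Finset.card_univ,
      nsmul_eq_mul, Finset.sum_const_zero] at h
    have hpos : 0 < (a - b) + Fintype.card ι * b := by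
      have := sub_pos.2 hab
      positivity
    refine (mul_eq_zero.1 ?_).resolve_left hpos.ne'
    linarith
  intro i
  simpa [hsum, (sub_pos.2 hab).ne'] using hrow i

theorem Submodule.finrank_add_finrank_map_le_of_le {K V V₂ : Type*} [DivisionRing K]
    [AddCommGroup V] [Module K V] [FiniteDimensional K V] [AddCommGroup V₂] [Module K V₂]
    (f : V →ₗ[K] V₂) {W U : Submodule K V} (hWU : W ≤ U) :
    finrank K W + finrank K (U.map f) ≤ finrank K (W.map f) + finrank K U := by
  have hW := (f.domRestrict W).finrank_range_add_finrank_ker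
  have hU := (f.domRestrict U).finrank_range_add_finrank_ker
  rw [LinearMap.range_domRestrict] at hW hU
  have hker : finrank K (LinearMap.ker (f.domRestrict W)) ≤
      finrank K (LinearMap.ker (f.domRestrict U)) := by
    refine LinearMap.finrank_le_finrank_of_injective
      (f := (Submodule.inclusion hWU).restrict fun x hx => ?_) ?_
    · simpa using hx
    · intro x y hxy
      exact Subtype.ext (Submodule.inclusion_injective hWU (congrArg Subtype.val hxy))
  omega

namespace Matrix

section Symmetric

variable (n R : Type*)

def symmetricSubmodule [Semiring R] : Submodule R (Matrix n n R) where
  carrier := {A | A.IsSymm}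
  add_mem' := IsSymm.add
  zero_mem' := isSymm_zero
  smul_mem' c _ h := h.smul c

def symmetricSubmoduleEquivSym2 [Semiring R] : symmetricSubmodule n R ≃ₗ[R] (Sym2 n → R) where
  toFun A := Sym2.lift ⟨fun i j => A.1 i j, fun i j => (A.2.apply i j).symm⟩
  invFun f := ⟨of fun i j => f s(i, j), IsSymm.ext fun i j => by simp [Sym2.eq_swap]⟩
  map_add' _ _ := by ext ⟨i, j⟩; rfl
  map_smul' _ _ := by ext ⟨i, j⟩; rfl
  left_inv _ := by ext; rfl
  right_inv _ := by ext ⟨i, j⟩; rfl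

theorem finrank_symmetricSubmodule [Fintype n] [Ring R] [StrongRankCondition R] :
    finrank R (symmetricSubmodule n R) = (Fintype.card n + 1).choose 2 := by
  rw [(symmetricSubmoduleEquivSym2 n R).finrank_eq, finrank_fintype_fun_eq_card, Sym2.card]

end Symmetric

theorem isSymm_mul_transpose {m n R : Type*} [Fintype n] [CommSemiring R] (A : Matrix m n R) :
    (A * Aᵀ).IsSymm := by
  simp only [IsSymm, transpose_mul, transpose_transpose]

section Compression

variable {m n k R : Type*} [Fintype m] [CommSemiring R]

def transposeMulMul (X : Matrix m n R) : Matrix m m R →ₗ[R] Matrix n n R where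
  toFun S := Xᵀ * S * X
  map_add' _ _ := by rw [Matrix.mul_add, Matrix.add_mul]
  map_smul' _ _ := by rw [Matrix.mul_smul, Matrix.smul_mul]; rfl

theorem transposeMulMul_apply (X : Matrix m n R) (S : Matrix m m R) :
    transposeMulMul X S = Xᵀ * S * X := rfl

theorem transposeMulMul_mul_transpose [Fintype k] (X : Matrix m n R) (Y : Matrix m k R) :
    transposeMulMul X (Y * Yᵀ) = (Yᵀ * X)ᵀ * (Yᵀ * X) := by
  simp only [transposeMulMul_apply, transpose_mul, transpose_transpose, Matrix.mul_assoc]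

theorem trace_mul_transpose_mul_mul_transpose [Fintype n] [Fintype k] (X : Matrix m n R)
    (Y : Matrix m k R) : trace (X * Xᵀ * (Y * Yᵀ)) = trace ((Xᵀ * Y)ᵀ * (Xᵀ * Y)) := by
  calc trace (X * Xᵀ * (Y * Yᵀ)) = trace ((X * Xᵀ * Y) * Yᵀ) := by simp only [Matrix.mul_assoc]
    _ = trace (Yᵀ * (X * Xᵀ * Y)) := trace_mul_comm _ _
    _ = trace ((Xᵀ * Y)ᵀ * (Xᵀ * Y)) := by
      simp only [transpose_mul, transpose_transpose, Matrix.mul_assoc]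

theorem IsSymm.mul_mul_transpose {S : Matrix m m R} (hS : S.IsSymm) (X : Matrix n m R) :
    (X * S * Xᵀ).IsSymm := by
  simp only [IsSymm, transpose_mul, transpose_transpose, hS.eq, Matrix.mul_assoc]

theorem symmetricSubmodule_le_map_transposeMulMul [Fintype n] [DecidableEq n]
    {X : Matrix m n R} (hX : Xᵀ * X = 1) :
    symmetricSubmodule n R ≤ (symmetricSubmodule m R).map (transposeMulMul X) := by
  intro T hT
  refine ⟨X * T * Xᵀ, IsSymm.mul_mul_transpose hT X, ?_⟩
  calc transposeMulMul X (X * T * Xᵀ) = (Xᵀ * X) * T * (Xᵀ * X) := by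
        simp only [transposeMulMul_apply, Matrix.mul_assoc]
    _ = T := by rw [hX, Matrix.one_mul, Matrix.mul_one]

end Compression

section EquiIsoclinic

variable {ι m n : Type*} [Fintype m] [Fintype n] [DecidableEq n] {X : ι → Matrix m n ℝ} {c : ℝ}

theorem linearIndependent_mul_transpose_of_equiIsoclinic [Fintype ι] [DecidableEq ι] [Nonempty n]
    (hX : ∀ i, (X i)ᵀ * X i = 1) (hc0 : 0 ≤ c) (hc1 : c < 1)
    (hiso : ∀ i j, i ≠ j → ((X i)ᵀ * X j)ᵀ * ((X i)ᵀ * X j) = c ^ 2 • 1) :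
    LinearIndependent ℝ fun i => X i * (X i)ᵀ := by
  have hc2 : c ^ 2 < 1 := by nlinarith
  have hn : (0 : ℝ) < Fintype.card n := Nat.cast_pos.2 Fintype.card_pos
  -- the trace form `(P, Q) ↦ trace (P * Q)` has Gram matrix `card n • (c² + (1 - c²) δ)`
  refine ((LinearMap.mul ℝ _).compr₂ (traceLinearMap _ ℝ ℝ)).linearIndependent_of_apply_eq_ite
    (a := Fintype.card n) (b := c ^ 2 * Fintype.card n) (by positivity) (by nlinarith)
    fun i j => ?_
  rw [LinearMap.compr₂_apply, LinearMap.mul_apply', traceLinearMap_apply,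
    trace_mul_transpose_mul_mul_transpose]
  split_ifs with h
  · rw [h, hX, transpose_one, Matrix.mul_one, trace_one]
  · rw [hiso i j h, trace_smul, trace_one, smul_eq_mul]

theorem map_transposeMulMul_span_mul_transpose_le_span_one_of_equiIsoclinic
    (hX : ∀ i, (X i)ᵀ * X i = 1)
    (hiso : ∀ i j, i ≠ j → ((X i)ᵀ * X j)ᵀ * ((X i)ᵀ * X j) = c ^ 2 • 1) (i₀ : ι) :
    (Submodule.span ℝ (Set.range fun i => X i * (X i)ᵀ)).map (transposeMulMul (X i₀)) ≤
      Submodule.span ℝ {1} := by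
  rw [Submodule.map_span_le]
  rintro _ ⟨i, rfl⟩
  rw [transposeMulMul_mul_transpose]
  by_cases h : i = i₀
  · rw [h, hX, transpose_one, Matrix.one_mul]
    exact Submodule.mem_span_singleton_self _
  · rw [hiso i i₀ h]
    exact Submodule.smul_mem _ _ (Submodule.mem_span_singleton_self _)

end EquiIsoclinic

end Matrix

theorem lemmens_seidel_real_general (d K N : ℕ) (hK : 0 < K)
    (hN : 0 < N) (X : Fin N → Matrix (Fin d) (Fin K) ℝ)
    (hX : ∀ n, (X n)ᵀ * X n = 1)
    (c : ℝ) (hc0 : 0 ≤ c) (hc1 : c < 1)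
    (hiso : ∀ m n : Fin N, m ≠ n →
      ((X m)ᵀ * X n)ᵀ * ((X m)ᵀ * X n) = (c ^ 2) • (1 : Matrix (Fin K) (Fin K) ℝ)) :
    (N : ℝ) ≤ (d : ℝ) * ((d : ℝ) + 1) / 2 - (K : ℝ) * ((K : ℝ) + 1) / 2 + 1 := by
  have : Nonempty (Fin K) := ⟨⟨0, hK⟩⟩
  let f := transposeMulMul (X ⟨0, hN⟩)
  let W := Submodule.span ℝ (Set.range fun n => X n * (X n)ᵀ)
  have hW : finrank ℝ W = N := by
    rw [finrank_span_eq_card (linearIndependent_mul_transpose_of_equiIsoclinic hX hc0 hc1 hiso),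
      Fintype.card_fin]
  have hWsym : W ≤ symmetricSubmodule (Fin d) ℝ :=
    Submodule.span_le.2 (Set.range_subset_iff.2 fun n => isSymm_mul_transpose (X n))
  have hWf : finrank ℝ (W.map f) ≤ 1 :=
    (Submodule.finrank_mono
      (map_transposeMulMul_span_mul_transpose_le_span_one_of_equiIsoclinic hX hiso _)).trans
      (by simpa using finrank_span_le_card ({1} : Set (Matrix (Fin K) (Fin K) ℝ)))
  have hf : finrank ℝ (symmetricSubmodule (Fin K) ℝ) ≤
      finrank ℝ ((symmetricSubmodule (Fin d) ℝ).map f) :=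
    Submodule.finrank_mono (symmetricSubmodule_le_map_transposeMulMul (hX _))
  have hrank := Submodule.finrank_add_finrank_map_le_of_le f hWsym
  rw [finrank_symmetricSubmodule, Fintype.card_fin] at hf hrank
  have hcount : (N : ℝ) + ((K + 1).choose 2 : ℕ) ≤ 1 + ((d + 1).choose 2 : ℕ) := by
    exact_mod_cast (by omega)
  rw [Nat.cast_choose_two, Nat.cast_choose_two] at hcount
  push_cast at hcount
  linarith

/-- **Lemmens–Seidel bound (real case)**: an equi-isoclinic family of `N` subspaces of
`ℝ^d`, each of dimension `K` (all cross-products `X_mᵀ X_n`, `m ≠ n`, satisfying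
`(X_mᵀ X_n)ᵀ (X_mᵀ X_n) = c² I_K` for a common constant `0 ≤ c < 1`), has
`N ≤ d(d+1)/2 − K(K+1)/2 + 1`. -/
theorem lemmens_seidel_real (d K N : ℕ) (hd : 0 < d) (hK : 0 < K) (hKd : K ≤ d)
    (hN : 0 < N) (X : Fin N → Matrix (Fin d) (Fin K) ℝ)
    (hX : ∀ n, (X n)ᵀ * X n = 1)
    (c : ℝ) (hc0 : 0 ≤ c) (hc1 : c < 1)
    (hiso : ∀ m n : Fin N, m ≠ n →
      ((X m)ᵀ * X n)ᵀ * ((X m)ᵀ * X n) = (c ^ 2) • (1 : Matrix (Fin K) (Fin K) ℝ)) :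
    (N : ℝ) ≤ (d : ℝ) * ((d : ℝ) + 1) / 2 - (K : ℝ) * ((K : ℝ) + 1) / 2 + 1 :=
  lemmens_seidel_real_general d K N hK hN X hX c hc0 hc1 hiso
end

section
/- Let d, K, N be positive integers with K ≤ d, and let X_1, …, X_N ∈ ℂ^{d×K} be matrices with orthonormal columns (X_nᴴ X_n = I_K for each n) representing an equi-isoclinic family: there exists c with 0 ≤ c < 1 such that (X_mᴴ X_n)ᴴ (X_mᴴ X_n) = c² · I_K for every pair m ≠ n. Then N ≤ d² − K² + 1. -/
open scoped Matrix
open Module Submodule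

/-- **Lemmens–Seidel bound (complex case)**: an equi-isoclinic family of `N` subspaces
of `ℂ^d`, each of dimension `K` (all cross-products `X_mᴴ X_n`, `m ≠ n`, satisfying
`(X_mᴴ X_n)ᴴ (X_mᴴ X_n) = c² I_K` for a common constant `0 ≤ c < 1`), has
`N ≤ d² − K² + 1`. -/
theorem lemmens_seidel_complex (d K N : ℕ) (hd : 0 < d) (hK : 0 < K) (hKd : K ≤ d)
    (hN : 0 < N) (X : Fin N → Matrix (Fin d) (Fin K) ℂ)
    (hX : ∀ n, (X n)ᴴ * X n = 1)
    (c : ℝ) (hc0 : 0 ≤ c) (hc1 : c < 1)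
    (hiso : ∀ m n : Fin N, m ≠ n →
      ((X m)ᴴ * X n)ᴴ * ((X m)ᴴ * X n) =
        ((c ^ 2 : ℝ) : ℂ) • (1 : Matrix (Fin K) (Fin K) ℂ)) :
    (N : ℝ) ≤ (d : ℝ) ^ 2 - (K : ℝ) ^ 2 + 1 := by
  classical
  set P : Fin N → Matrix (Fin d) (Fin d) ℂ := fun n => X n * (X n)ᴴ with hP
  -- trace computation
  have htr : ∀ m n : Fin N, Matrix.trace (P m * P n) =
      if m = n then (K : ℂ) else ((c ^ 2 : ℝ) : ℂ) * K := by
    intro m n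
    have h1 : P m * P n = (X m * ((X m)ᴴ * X n)) * (X n)ᴴ := by
      simp [hP, Matrix.mul_assoc]
    have h2 : (X n)ᴴ * (X m * ((X m)ᴴ * X n)) = ((X m)ᴴ * X n)ᴴ * ((X m)ᴴ * X n) := by
      simp [Matrix.conjTranspose_mul, Matrix.mul_assoc]
    rw [h1, Matrix.trace_mul_comm, h2]
    by_cases h : m = n
    · subst h
      simp [hX]
    · rw [hiso m n h, if_neg h]
      simp [Matrix.trace_smul, Matrix.trace_one]
  have h1c : (1 : ℂ) - ((c ^ 2 : ℝ) : ℂ) ≠ 0 := by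
    rw [sub_ne_zero]
    intro h
    have : (1:ℝ) = c^2 := by exact_mod_cast h
    nlinarith
  -- linear independence of the projections
  have indepP : ∀ b : Fin N → ℂ, (∑ j, b j • P j) = 0 → ∀ j, b j = 0 := by
    intro b hb
    set S : ℂ := ∑ j, b j with hS
    have key : ∀ m, ((1 : ℂ) - ((c ^ 2 : ℝ) : ℂ)) * b m + ((c ^ 2 : ℝ) : ℂ) * S = 0 := by
      intro m
      have h0 : Matrix.trace (P m * ∑ j, b j • P j) = 0 := by rw [hb]; simp
      have h1 : Matrix.trace (P m * ∑ j, b j • P j)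
          = ∑ j, b j * Matrix.trace (P m * P j) := by
        rw [Matrix.mul_sum, Matrix.trace_sum]
        congr 1; ext j
        rw [Matrix.mul_smul, Matrix.trace_smul, smul_eq_mul]
      have e1 : ∑ x ∈ Finset.univ.erase m, (b x * if m = x then (K:ℂ) else ((c^2:ℝ):ℂ) * K)
          = (∑ x ∈ Finset.univ.erase m, b x) * (((c^2:ℝ):ℂ) * K) := by
        rw [Finset.sum_mul]
        refine Finset.sum_congr rfl fun x hx => ?_
        rw [if_neg (Ne.symm (Finset.ne_of_mem_erase hx))]
      have e2 : ∑ x ∈ Finset.univ.erase m, b x = S - b m := by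
        rw [hS, ← Finset.sum_erase_add _ _ (Finset.mem_univ m)]; ring
      have h2 : ∑ j, b j * Matrix.trace (P m * P j)
          = (K : ℂ) * (((1 : ℂ) - ((c ^ 2 : ℝ) : ℂ)) * b m + ((c ^ 2 : ℝ) : ℂ) * S) := by
        simp only [htr]
        rw [← Finset.sum_erase_add _ _ (Finset.mem_univ m), e1, e2, if_pos rfl]
        ring
      have hK' : (K : ℂ) ≠ 0 := by exact_mod_cast hK.ne'
      have hfin := h0.symm.trans (h1.trans h2)
      exact ((mul_eq_zero.mp hfin.symm).resolve_left hK')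
    have h : ∑ m : Fin N, (((1:ℂ) - ((c^2:ℝ):ℂ)) * b m + ((c^2:ℝ):ℂ) * S) = 0 := by
      exact Finset.sum_eq_zero fun m _ => key m
    rw [Finset.sum_add_distrib, ← Finset.mul_sum, ← hS, Finset.sum_const, Finset.card_univ,
      Fintype.card_fin, nsmul_eq_mul] at h
    have hSsum : (((1 : ℂ) - ((c ^ 2 : ℝ) : ℂ)) + N * ((c ^ 2 : ℝ) : ℂ)) * S = 0 := by
      linear_combination h
    have hpos : (((1 : ℂ) - ((c ^ 2 : ℝ) : ℂ)) + N * ((c ^ 2 : ℝ) : ℂ)) ≠ 0 := by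
      have hcast : ((1 - c ^ 2 + N * c ^ 2 : ℝ) : ℂ)
          = ((1 : ℂ) - ((c ^ 2 : ℝ) : ℂ)) + N * ((c ^ 2 : ℝ) : ℂ) := by push_cast; ring
      rw [← hcast]
      have hr : (1 - c^2 + N*c^2 : ℝ) ≠ 0 := by
        have h1 : (0:ℝ) ≤ (N:ℝ) * c^2 := by positivity
        nlinarith
      exact_mod_cast hr
    have hS0 : S = 0 := (mul_eq_zero.mp hSsum).resolve_left hpos
    intro j
    have hj := key j
    rw [hS0, mul_zero, add_zero] at hj
    exact (mul_eq_zero.mp hj).resolve_left h1c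
  -- the compression map
  set o : Fin N := ⟨0, hN⟩ with ho
  set Φ : Matrix (Fin d) (Fin d) ℂ →ₗ[ℂ] Matrix (Fin K) (Fin K) ℂ :=
    { toFun := fun A => (X o)ᴴ * A * X o
      map_add' := fun A B => by simp [Matrix.mul_add, Matrix.add_mul]
      map_smul' := fun r A => by simp [Matrix.mul_smul, Matrix.smul_mul] } with hΦ
  have hΦap : ∀ A, Φ A = (X o)ᴴ * A * X o := fun A => rfl
  have hsurj : Function.Surjective Φ := by
    intro C
    refine ⟨X o * C * (X o)ᴴ, ?_⟩
    rw [hΦap]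
    simp only [Matrix.mul_assoc, hX o, Matrix.mul_one]
    rw [← Matrix.mul_assoc, hX o, Matrix.one_mul]
  have hker : finrank ℂ (LinearMap.ker Φ) = d*d - K*K := by
    have hrn := LinearMap.finrank_range_add_finrank_ker Φ
    rw [LinearMap.range_eq_top.mpr hsurj, finrank_top] at hrn
    have h1 : finrank ℂ (Matrix (Fin K) (Fin K) ℂ) = K*K := by
      simp [Module.finrank_matrix]
    have h2 : finrank ℂ (Matrix (Fin d) (Fin d) ℂ) = d*d := by
      simp [Module.finrank_matrix]
    omega
  -- value of Φ on the projections
  have hΦP : ∀ n : Fin N, n ≠ o → Φ (P n) = ((c ^ 2 : ℝ) : ℂ) • (1 : Matrix (Fin K) (Fin K) ℂ) := by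
    intro n hn
    rw [hΦap]
    have : (X o)ᴴ * (X n * (X n)ᴴ) * X o = ((X n)ᴴ * X o)ᴴ * ((X n)ᴴ * X o) := by
      simp [Matrix.conjTranspose_mul, Matrix.mul_assoc]
    rw [hP, this, hiso n o hn]
  have hΦPo : Φ (P o) = (1 : Matrix (Fin K) (Fin K) ℂ) := by
    rw [hΦap, hP]
    simp only [Matrix.mul_assoc, hX o, Matrix.mul_one]
  -- the family in the kernel
  set w : {i : Fin N // i ≠ o} → Matrix (Fin d) (Fin d) ℂ :=
    fun i => P (i : Fin N) - ((c ^ 2 : ℝ) : ℂ) • P o with hw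
  have hwker : ∀ i, w i ∈ LinearMap.ker Φ := by
    intro i
    rw [LinearMap.mem_ker, hw]
    simp only [map_sub, map_smul, hΦP (i : Fin N) i.2, hΦPo, smul_eq_mul]
    exact sub_self _
  have hli : LinearIndependent ℂ w := by
    rw [Fintype.linearIndependent_iff]
    intro g hg
    set G : ℂ := ∑ i, g i with hG
    set b : Fin N → ℂ := fun j => if h : j = o then -(((c ^ 2 : ℝ) : ℂ)) * G else g ⟨j, h⟩ with hbdef
    have hbo : b o = -(((c ^ 2 : ℝ) : ℂ)) * G := by rw [hbdef]; simp
    have hbi : ∀ i : {i : Fin N // i ≠ o}, b (i : Fin N) = g i := by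
      intro i; rw [hbdef]; simp [dif_neg i.2]
    have hbsum : ∑ j, b j • P j = 0 := by
      rw [← Finset.add_sum_erase Finset.univ (fun j => b j • P j) (Finset.mem_univ o)]
      have hsub : ∑ j ∈ Finset.univ.erase o, b j • P j
          = ∑ i : {i : Fin N // i ≠ o}, b (i : Fin N) • P (i : Fin N) := by
        exact Finset.sum_subtype _ (by simp) (fun j => b j • P j)
      rw [hsub]
      have : ∑ i : {i : Fin N // i ≠ o}, b (i : Fin N) • P (i : Fin N)
          = ∑ i : {i : Fin N // i ≠ o}, g i • P (i : Fin N) := by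
        exact Finset.sum_congr rfl fun i _ => by rw [hbi i]
      rw [this, hbo]
      have hg' : ∑ i : {i : Fin N // i ≠ o}, g i • P (i : Fin N)
          = (∑ i, g i) • (((c ^ 2 : ℝ) : ℂ) • P o) := by
        have := hg
        simp only [hw, smul_sub] at this
        rw [Finset.sum_sub_distrib] at this
        rw [sub_eq_zero] at this
        rw [this, Finset.sum_smul]
      rw [hg', ← hG, smul_smul, ← add_smul]
      have hz : -(((c ^ 2 : ℝ) : ℂ)) * G + G * ((c ^ 2 : ℝ) : ℂ) = 0 := by ring
      rw [hz, zero_smul]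
    have hb0 := indepP b hbsum
    intro i
    rw [← hbi i, hb0]
  -- dimension count
  have hcard : Fintype.card {i : Fin N // i ≠ o} ≤ d*d - K*K := by
    have hspan := finrank_span_eq_card hli
    have hle : span ℂ (Set.range w) ≤ LinearMap.ker Φ := by
      rw [span_le]
      rintro _ ⟨i, rfl⟩
      exact hwker i
    have := Submodule.finrank_mono hle
    rw [hspan, hker] at this
    exact this
  have hcard2 : Fintype.card {i : Fin N // i ≠ o} = N - 1 := by
    rw [Fintype.card_subtype_compl]
    simp
  have hNle : N ≤ (d*d - K*K) + 1 := by omega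
  have hKd2 : K*K ≤ d*d := Nat.mul_le_mul hKd hKd
  have : (N : ℝ) ≤ ((d*d - K*K) + 1 : ℕ) := by exact_mod_cast hNle
  rw [Nat.cast_add, Nat.cast_sub hKd2] at this
  push_cast at this
  nlinarith [this]
end

section
/- Let n, d be positive integers with d ≤ n. Let H ∈ ℂ^{n×n} be Hermitian with eigenvalue decomposition H = Σ_{j=1}^n λ_j u_j u_jᴴ, where λ_1 ≥ λ_2 ≥ … ≥ λ_n are the eigenvalues arranged in nonincreasing order and u_1, …, u_n are corresponding orthonormal eigenvectors. Suppose γ ∈ ℝ satisfies Σ_{j=1}^d max(λ_j − γ, 0) = n. Define G* = Σ_{j=1}^d max(λ_j − γ, 0) · u_j u_jᴴ. Then G* is positive semidefinite, rank(G*) ≤ d, trace(G*) = n, and for every positive semidefinite matrix G ∈ ℂ^{n×n} with rank(G) ≤ d and trace(G) = n one has ‖G* − H‖_F ≤ ‖G − H‖_F. -/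
open scoped Matrix ComplexOrder

/-- The Frobenius norm of a complex matrix: `‖A‖_F = (trace(AᴴA))^{1/2}
= (∑ᵢⱼ |Aᵢⱼ|²)^{1/2}`. -/
noncomputable def frobNorm {m n : Type*} [Fintype m] [Fintype n]
    (A : Matrix m n ℂ) : ℝ :=
  Real.sqrt (∑ i, ∑ j, ‖A i j‖ ^ 2)

/-!
Conjugating by the unitary `U` whose columns are the `uⱼ` reduces everything to comparing a
matrix `B = UᴴGU` with `diag λ`. Let `μ` be the eigenvalues of `B` in nonincreasing order. The
diagonal of `B` is `Sμ` for a doubly stochastic `S` (the squared moduli of the entries of a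
unitary diagonalising `B`), so Birkhoff's theorem and the rearrangement inequality give
`∑ λᵢ Re Bᵢᵢ ≤ ∑ λᵢ μᵢ`, that is `‖B - diag λ‖_F² ≥ ∑ (μᵢ - λᵢ)²`. For `G` in the constraint set,
`μ ≥ 0`, `∑ μ = n` and `μ` vanishes from index `d` on, and among such vectors `(λᵢ - γ)₊` (for
`i < d`) is closest to `λ` by a Lagrange multiplier argument with multiplier `γ`.
-/

open Matrix Finset

section Frobenius

variable {m n : Type*} [Fintype m] [Fintype n]

theorem frobNorm_nonneg (A : Matrix m n ℂ) : 0 ≤ frobNorm A :=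
  Real.sqrt_nonneg _

theorem frobNorm_sq (A : Matrix m n ℂ) : frobNorm A ^ 2 = ∑ i, ∑ j, ‖A i j‖ ^ 2 :=
  Real.sq_sqrt (by positivity)

theorem re_trace_conjTranspose_mul_self (A : Matrix m n ℂ) :
    (Aᴴ * A).trace.re = ∑ i, ∑ j, ‖A i j‖ ^ 2 := by
  simp only [trace, diag_apply, mul_apply, conjTranspose_apply, Complex.re_sum,
    Complex.star_def, Complex.conj_mul', ← Complex.ofReal_pow, Complex.ofReal_re]
  exact sum_comm

theorem frobNorm_eq_sqrt_re_trace (A : Matrix m n ℂ) :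
    frobNorm A = √(Aᴴ * A).trace.re := by
  rw [frobNorm, re_trace_conjTranspose_mul_self]

variable [DecidableEq n]

theorem frobNorm_unitary_conj {U : Matrix n n ℂ} (hU : U ∈ unitaryGroup n ℂ)
    (A : Matrix n n ℂ) : frobNorm (U * A * Uᴴ) = frobNorm A := by
  have hUU : Uᴴ * U = 1 := mem_unitaryGroup_iff'.mp hU
  rw [frobNorm_eq_sqrt_re_trace, frobNorm_eq_sqrt_re_trace]
  congr 2
  calc ((U * A * Uᴴ)ᴴ * (U * A * Uᴴ)).trace = (U * (Aᴴ * A) * Uᴴ).trace := by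
        simp only [conjTranspose_mul, conjTranspose_conjTranspose, Matrix.mul_assoc]
        rw [← Matrix.mul_assoc Uᴴ U, hUU, Matrix.one_mul]
    _ = (Aᴴ * A).trace := by
        rw [trace_mul_cycle, hUU, Matrix.one_mul]

theorem frobNorm_sub_unitary_conj {U : Matrix n n ℂ} (hU : U ∈ unitaryGroup n ℂ)
    (G A : Matrix n n ℂ) : frobNorm (G - U * A * Uᴴ) = frobNorm (Uᴴ * G * U - A) := by
  have hUU : U * Uᴴ = 1 := mem_unitaryGroup_iff.mp hU
  rw [← frobNorm_unitary_conj hU (Uᴴ * G * U - A), Matrix.mul_sub, Matrix.sub_mul]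
  simp only [← Matrix.mul_assoc, hUU, Matrix.one_mul]
  simp only [Matrix.mul_assoc, hUU, Matrix.mul_one]

theorem frobNorm_sq_sub_diagonal (B : Matrix n n ℂ) (lam : n → ℝ) :
    frobNorm (B - diagonal fun i => (lam i : ℂ)) ^ 2
      = frobNorm B ^ 2 - 2 * ∑ i, lam i * (B i i).re + ∑ i, lam i ^ 2 := by
  have hdiag (i : n) :
      ‖B i i - lam i‖ ^ 2 = ‖B i i‖ ^ 2 - 2 * (lam i * (B i i).re) + lam i ^ 2 := by
    simp only [Complex.sq_norm, Complex.normSq_apply, Complex.sub_re, Complex.sub_im,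
      Complex.ofReal_re, Complex.ofReal_im, sub_zero]
    ring
  simp only [frobNorm_sq, Matrix.sub_apply, diagonal_apply]
  rw [mul_sum, ← sum_sub_distrib, ← sum_add_distrib]
  refine sum_congr rfl fun i _ => ?_
  rw [← add_sum_erase _ _ (mem_univ i), ← add_sum_erase _ _ (mem_univ i), if_pos rfl, hdiag]
  have hoff : ∀ j ∈ univ.erase i, ‖B i j - if i = j then (lam i : ℂ) else 0‖ ^ 2 = ‖B i j‖ ^ 2 :=
    fun j hj => by rw [if_neg (ne_of_mem_erase hj).symm, sub_zero]
  rw [sum_congr rfl hoff]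
  ring

theorem frobNorm_sq_diagonal (w : n → ℝ) :
    frobNorm (diagonal fun i => (w i : ℂ)) ^ 2 = ∑ i, w i ^ 2 := by
  simpa [frobNorm_sq] using frobNorm_sq_sub_diagonal (0 : Matrix n n ℂ) (-w)

end Frobenius

theorem Matrix.rank_mul_mul_le {l m n R : Type*} [Fintype l] [Fintype m] [Fintype n] [CommRing R]
    [StrongRankCondition R] (A : Matrix l m R) (B : Matrix m n R) (C : Matrix n l R) :
    (A * B * C).rank ≤ B.rank :=
  (rank_mul_le_left _ _).trans (rank_mul_le_right _ _)

theorem Monovary.sum_mul_mulVec_le {n : Type*} [Fintype n] [DecidableEq n] {x y : n → ℝ}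
    (hxy : Monovary x y) {S : Matrix n n ℝ} (hS : S ∈ doublyStochastic ℝ n) :
    ∑ i, x i * (S *ᵥ y) i ≤ ∑ i, x i * y i := by
  have hlin : IsLinearMap ℝ fun M : Matrix n n ℝ => ∑ i, x i * (M *ᵥ y) i :=
    ⟨fun M N => by simp only [add_mulVec, Pi.add_apply, mul_add, sum_add_distrib],
      fun c M => by simp only [smul_mulVec, Pi.smul_apply, smul_eq_mul, mul_sum, mul_left_comm]⟩
  rw [← SetLike.mem_coe, doublyStochastic_eq_convexHull_permMatrix] at hS
  refine convexHull_min ?_ (convex_halfSpace_le hlin _) hS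
  rintro _ ⟨σ, rfl⟩
  simp only [Set.mem_ofPred_eq, permMatrix_mulVec, Function.comp_apply]
  exact hxy.sum_mul_comp_perm_le_sum_mul

namespace Matrix

variable {n : Type*} [Fintype n] [DecidableEq n]

theorem transpose_of_mem_unitaryGroup {α : Type*} [CommRing α] [StarRing α]
    {u : n → n → α} (hu : ∀ j k, ∑ i, star (u j i) * u k i = if j = k then 1 else 0) :
    (of u)ᵀ ∈ unitaryGroup n α := by
  rw [mem_unitaryGroup_iff']
  ext j k
  simpa [mul_apply, one_apply] using hu j k

theorem transpose_of_mul_diagonal_mul_conjTranspose {m : Type*} (u : n → m → ℂ) (w : n → ℂ) :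
    (of u)ᵀ * diagonal w * (of u)ᵀᴴ = ∑ j, w j • vecMulVec (u j) (star (u j)) := by
  ext i k
  rw [mul_apply]
  simp only [mul_diagonal, transpose_apply, conjTranspose_apply, of_apply, Matrix.sum_apply,
    Matrix.smul_apply, vecMulVec_apply, Pi.star_apply, smul_eq_mul]
  exact sum_congr rfl fun j _ => by ring

theorem norm_sq_entries_mem_doublyStochastic {U : Matrix n n ℂ} (hU : U ∈ unitaryGroup n ℂ) :
    (of fun i j => ‖U i j‖ ^ 2) ∈ doublyStochastic ℝ n := by
  have hrow (i : n) : ∑ j, ‖U i j‖ ^ 2 = 1 := by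
    have := congrArg Complex.re (congrFun (congrFun (mem_unitaryGroup_iff.mp hU) i) i)
    simpa [mul_apply, Complex.mul_conj', ← Complex.ofReal_pow] using this
  have hcol (j : n) : ∑ i, ‖U i j‖ ^ 2 = 1 := by
    have := congrArg Complex.re (congrFun (congrFun (mem_unitaryGroup_iff'.mp hU) j) j)
    simpa [mul_apply, Complex.conj_mul', ← Complex.ofReal_pow] using this
  exact mem_doublyStochastic_iff_sum.mpr ⟨fun i j => sq_nonneg _, hrow, hcol⟩

namespace IsHermitian

variable {B : Matrix n n ℂ} (hB : B.IsHermitian)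
include hB

theorem frobNorm_sq_eq_sum_sq_eigenvalues : frobNorm B ^ 2 = ∑ i, hB.eigenvalues i ^ 2 := by
  conv_lhs => rw [hB.spectral_theorem, Unitary.conjStarAlgAut_apply, star_eq_conjTranspose,
    frobNorm_unitary_conj hB.eigenvectorUnitary.2]
  exact frobNorm_sq_diagonal hB.eigenvalues

theorem exists_doublyStochastic_re_diag :
    ∃ S ∈ doublyStochastic ℝ n, (fun i => (B i i).re) = S *ᵥ hB.eigenvalues := by
  set V : Matrix n n ℂ := ↑hB.eigenvectorUnitary
  refine ⟨of fun i j => ‖V i j‖ ^ 2,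
    norm_sq_entries_mem_doublyStochastic hB.eigenvectorUnitary.2, funext fun i => ?_⟩
  have hBii : B i i = ∑ k, ((hB.eigenvalues k * ‖V i k‖ ^ 2 : ℝ) : ℂ) := by
    conv_lhs => rw [hB.spectral_theorem, Unitary.conjStarAlgAut_apply, mul_apply]
    refine sum_congr rfl fun k _ => ?_
    simp only [mul_diagonal, Function.comp_apply, star_apply, V, RCLike.star_def,
      RCLike.ofReal_eq_complex_ofReal]
    push_cast
    rw [mul_right_comm, Complex.mul_conj', mul_comm]
  rw [hBii, ← Complex.ofReal_sum, Complex.ofReal_re]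
  simp only [mulVec, dotProduct, of_apply]
  exact sum_congr rfl fun k _ => mul_comm _ _

/-- The case of the Hoffman–Wielandt inequality in which one matrix is diagonal. -/
theorem sum_sq_sub_le_frobNorm_sq_sub_diagonal {lam μ : n → ℝ} (hlamμ : Monovary lam μ)
    {e : Equiv.Perm n} (he : hB.eigenvalues = μ ∘ e) :
    ∑ i, (μ i - lam i) ^ 2 ≤ frobNorm (B - diagonal fun i => (lam i : ℂ)) ^ 2 := by
  obtain ⟨S, hS, hdiag⟩ := hB.exists_doublyStochastic_re_diag
  have hdiag' : (fun i => (B i i).re) = (S * e.permMatrix ℝ) *ᵥ μ := by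
    rw [hdiag, he, ← mulVec_mulVec, permMatrix_mulVec]
  have hcross : ∑ i, lam i * (B i i).re ≤ ∑ i, lam i * μ i := by
    have := hlamμ.sum_mul_mulVec_le (mul_mem hS (permMatrix_mem_doublyStochastic (σ := e)))
    rwa [← hdiag'] at this
  have hsq : ∑ i, hB.eigenvalues i ^ 2 = ∑ i, μ i ^ 2 := by
    rw [he]
    exact Equiv.sum_comp e fun i => μ i ^ 2
  have hexpand : ∑ i, (μ i - lam i) ^ 2
      = ∑ i, μ i ^ 2 - 2 * ∑ i, lam i * μ i + ∑ i, lam i ^ 2 := by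
    rw [mul_sum, ← sum_sub_distrib, ← sum_add_distrib]
    exact sum_congr rfl fun i _ => by ring
  rw [frobNorm_sq_sub_diagonal, hB.frobNorm_sq_eq_sum_sq_eigenvalues, hsq, hexpand]
  linarith

end IsHermitian

end Matrix

theorem Matrix.IsHermitian.exists_antitone_eigenvalues {n : ℕ} {B : Matrix (Fin n) (Fin n) ℂ}
    (hB : B.IsHermitian) :
    ∃ (μ : Fin n → ℝ) (e : Equiv.Perm (Fin n)), Antitone μ ∧ hB.eigenvalues = μ ∘ e := by
  refine ⟨hB.eigenvalues₀ ∘ Fin.cast (Fintype.card_fin n).symm,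
    (Fintype.equivOfCardEq (Fintype.card_fin _)).symm.trans (finCongr (Fintype.card_fin n)),
    hB.eigenvalues₀_antitone.comp_monotone (Fin.cast_strictMono _).monotone, ?_⟩
  ext i
  simp [IsHermitian.eigenvalues]

theorem Antitone.eq_zero_of_card_ne_zero_le {n d : ℕ} {μ : Fin n → ℝ} (hμ : Antitone μ)
    (hμ0 : ∀ i, 0 ≤ μ i) (hcard : Fintype.card {i // μ i ≠ 0} ≤ d) {i : Fin n} (hi : d ≤ i) :
    μ i = 0 := by
  by_contra hne
  have hpos : 0 < μ i := (hμ0 i).lt_of_ne' hne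
  have hsub : Iic i ⊆ univ.filter fun j => μ j ≠ 0 := fun j hj =>
    mem_filter.mpr ⟨mem_univ j, (hpos.trans_le (hμ (mem_Iic.mp hj))).ne'⟩
  have := card_le_card hsub
  rw [Fin.card_Iic, ← Fintype.card_subtype] at this
  omega

section ShiftTruncate

variable {ι : Type*} [DecidableEq ι]

def shiftTruncate (s : Finset ι) (lam : ι → ℝ) (γ : ℝ) (j : ι) : ℝ :=
  if j ∈ s then max (lam j - γ) 0 else 0

variable {s : Finset ι} {lam : ι → ℝ} {γ : ℝ}

theorem shiftTruncate_nonneg (j : ι) : 0 ≤ shiftTruncate s lam γ j := by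
  unfold shiftTruncate
  split_ifs
  exacts [le_max_right _ _, le_rfl]

variable [Fintype ι]

theorem sum_shiftTruncate : ∑ j, shiftTruncate s lam γ j = ∑ j ∈ s, max (lam j - γ) 0 := by
  unfold shiftTruncate
  rw [sum_ite_mem, univ_inter]

theorem rank_diagonal_shiftTruncate_le :
    (diagonal fun j => (shiftTruncate s lam γ j : ℂ)).rank ≤ s.card := by
  rw [rank_diagonal, Fintype.card_subtype]
  refine card_le_card fun j hj => ?_
  by_contra hjs
  simp [shiftTruncate, hjs] at hj

/-- Summing the pointwise inequality `(t - λ)² - 2γ(ν - t) ≤ (ν - λ)²`, a Lagrangian bound with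
multiplier `γ` for the constraint `∑ ν = ∑ t`. -/
theorem sum_sq_shiftTruncate_sub_le {ν : ι → ℝ} (hν : ∀ i, 0 ≤ ν i)
    (hνs : ∀ i ∉ s, ν i = 0) (hsum : ∑ i, ν i = ∑ i, shiftTruncate s lam γ i) :
    ∑ i, (shiftTruncate s lam γ i - lam i) ^ 2 ≤ ∑ i, (ν i - lam i) ^ 2 := by
  set t := shiftTruncate s lam γ
  have hpt (i : ι) : (t i - lam i) ^ 2 - 2 * γ * (ν i - t i) ≤ (ν i - lam i) ^ 2 := by
    simp only [t, shiftTruncate]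
    by_cases hi : i ∈ s
    · rw [if_pos hi]
      rcases le_total γ (lam i) with h | h
      · rw [max_eq_left (sub_nonneg.mpr h)]
        nlinarith [sq_nonneg (ν i - (lam i - γ))]
      · rw [max_eq_right (sub_nonpos.mpr h)]
        nlinarith [mul_nonneg (hν i) (sub_nonneg.mpr h), sq_nonneg (ν i)]
    · rw [if_neg hi, hνs i hi]
      nlinarith
  have hmult : ∑ i, 2 * γ * (ν i - t i) = 0 := by
    rw [← mul_sum, sum_sub_distrib, hsum, sub_self, mul_zero]
  calc ∑ i, (t i - lam i) ^ 2 = ∑ i, ((t i - lam i) ^ 2 - 2 * γ * (ν i - t i)) := by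
        rw [sum_sub_distrib, hmult, sub_zero]
    _ ≤ ∑ i, (ν i - lam i) ^ 2 := sum_le_sum fun i _ => hpt i

end ShiftTruncate

theorem frobNorm_diagonal_shiftTruncate_sub_le {n d : ℕ} {lam : Fin n → ℝ} (hlam : Antitone lam)
    (γ : ℝ) {B : Matrix (Fin n) (Fin n) ℂ} (hB : B.PosSemidef) (hrank : B.rank ≤ d)
    (htr : B.trace = ∑ j, (shiftTruncate {j : Fin n | (j : ℕ) < d} lam γ j : ℂ)) :
    frobNorm ((diagonal fun j => (shiftTruncate {j : Fin n | (j : ℕ) < d} lam γ j : ℂ))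
      - diagonal fun j => (lam j : ℂ)) ≤ frobNorm (B - diagonal fun j => (lam j : ℂ)) := by
  set t := shiftTruncate {j : Fin n | (j : ℕ) < d} lam γ
  obtain ⟨μ, e, hμ, he⟩ := hB.isHermitian.exists_antitone_eigenvalues
  have hμ0 (i : Fin n) : 0 ≤ μ i := by
    simpa [he] using hB.eigenvalues_nonneg (e.symm i)
  have hμsum : ∑ i, μ i = ∑ j, t j := by
    have h := hB.isHermitian.trace_eq_sum_eigenvalues.symm.trans htr
    simp only [he, Function.comp_apply] at h
    rw [← Equiv.sum_comp e μ]
    apply Complex.ofReal_injective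
    push_cast
    exact h
  have hcard : Fintype.card {i // μ i ≠ 0} ≤ d := by
    rw [hB.isHermitian.rank_eq_card_non_zero_eigs, he] at hrank
    exact (Fintype.card_congr (e.subtypeEquiv fun _ => Iff.rfl)).symm.trans_le hrank
  simp only [diagonal_sub, ← Complex.ofReal_sub]
  rw [← pow_le_pow_iff_left₀ (frobNorm_nonneg _) (frobNorm_nonneg _) two_ne_zero,
    frobNorm_sq_diagonal]
  calc ∑ j, (t j - lam j) ^ 2 ≤ ∑ i, (μ i - lam i) ^ 2 :=
        sum_sq_shiftTruncate_sub_le hμ0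
          (fun i hi => hμ.eq_zero_of_card_ne_zero_le hμ0 hcard (by simpa using hi)) hμsum
    _ ≤ _ := hB.isHermitian.sum_sq_sub_le_frobNorm_sq_sub_diagonal (hlam.monovary hμ) he

theorem nearest_spectral_constraint_general (n d : ℕ)
    (lam : Fin n → ℝ) (hlam : Antitone lam)
    (u : Fin n → Fin n → ℂ)
    (hu : ∀ j k : Fin n, (∑ i, star (u j i) * u k i) = if j = k then (1 : ℂ) else 0)
    (H : Matrix (Fin n) (Fin n) ℂ)
    (hH : H = ∑ j, ((lam j : ℝ) : ℂ) • Matrix.vecMulVec (u j) (star (u j)))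
    (γ : ℝ)
    (hγ : ∑ j ∈ Finset.univ.filter (fun j : Fin n => (j : ℕ) < d),
      max (lam j - γ) 0 = (n : ℝ))
    (Gstar : Matrix (Fin n) (Fin n) ℂ)
    (hGstar : Gstar = ∑ j ∈ Finset.univ.filter (fun j : Fin n => (j : ℕ) < d),
      ((max (lam j - γ) 0 : ℝ) : ℂ) • Matrix.vecMulVec (u j) (star (u j))) :
    Gstar.PosSemidef ∧ Gstar.rank ≤ d ∧ Gstar.trace = (n : ℂ) ∧
      ∀ G : Matrix (Fin n) (Fin n) ℂ,
        G.PosSemidef → G.rank ≤ d → G.trace = (n : ℂ) →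
        frobNorm (Gstar - H) ≤ frobNorm (G - H) := by
  set U := (of u)ᵀ
  have hU : U ∈ unitaryGroup (Fin n) ℂ := transpose_of_mem_unitaryGroup hu
  have hUU : Uᴴ * U = 1 := mem_unitaryGroup_iff'.mp hU
  have hUU' : U * Uᴴ = 1 := mem_unitaryGroup_iff.mp hU
  set t := shiftTruncate {j : Fin n | (j : ℕ) < d} lam γ
  have hHU : H = U * diagonal (fun j => (lam j : ℂ)) * Uᴴ := by
    rw [hH, transpose_of_mul_diagonal_mul_conjTranspose]
  have hGU : Gstar = U * diagonal (fun j => (t j : ℂ)) * Uᴴ := by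
    rw [hGstar, transpose_of_mul_diagonal_mul_conjTranspose, sum_filter]
    refine sum_congr rfl fun j _ => ?_
    by_cases hj : (j : ℕ) < d <;> simp [t, shiftTruncate, hj]
  have htsum : ∑ j, (t j : ℂ) = n := by
    rw [← Complex.ofReal_sum, sum_shiftTruncate, hγ, Complex.ofReal_natCast]
  refine ⟨?_, ?_, ?_, fun G hG hGrank hGtr => ?_⟩
  · rw [hGU]
    exact (posSemidef_diagonal_iff.mpr fun j => Complex.zero_le_real.mpr
      (shiftTruncate_nonneg j)).mul_mul_conjTranspose_same U
  · rw [hGU]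
    exact (rank_mul_mul_le _ _ _).trans <|
      rank_diagonal_shiftTruncate_le.trans (Fin.card_filter_val_lt.trans_le (min_le_right _ _))
  · rw [hGU, trace_mul_cycle, hUU, Matrix.one_mul, trace_diagonal, htsum]
  · rw [hGU, hHU, ← Matrix.sub_mul, ← Matrix.mul_sub, frobNorm_unitary_conj hU,
      frobNorm_sub_unitary_conj hU]
    refine frobNorm_diagonal_shiftTruncate_sub_le hlam γ (hG.conjTranspose_mul_mul_same U)
      ((rank_mul_mul_le _ _ _).trans hGrank) ?_
    rw [trace_mul_cycle, hUU', Matrix.one_mul, hGtr, htsum]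

/-- **Projection onto the spectral constraint set.**  Let `H = ∑ⱼ λⱼ uⱼ uⱼᴴ` be a
Hermitian `n × n` matrix with nonincreasing eigenvalues `λ` and orthonormal
eigenvectors `u`.  If `γ` satisfies `∑_{j<d} (λⱼ − γ)₊ = n`, then
`G* = ∑_{j<d} (λⱼ − γ)₊ uⱼ uⱼᴴ` is positive semidefinite, has rank at most `d` and
trace `n`, and minimizes the Frobenius distance to `H` over all positive-semidefinite
matrices of rank at most `d` and trace `n`. -/
theorem nearest_spectral_constraint (n d : ℕ) (hn : 0 < n) (hd : 0 < d) (hdn : d ≤ n)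
    (lam : Fin n → ℝ) (hlam : Antitone lam)
    (u : Fin n → Fin n → ℂ)
    (hu : ∀ j k : Fin n, (∑ i, star (u j i) * u k i) = if j = k then (1 : ℂ) else 0)
    (H : Matrix (Fin n) (Fin n) ℂ)
    (hH : H = ∑ j, ((lam j : ℝ) : ℂ) • Matrix.vecMulVec (u j) (star (u j)))
    (γ : ℝ)
    (hγ : ∑ j ∈ Finset.univ.filter (fun j : Fin n => (j : ℕ) < d),
      max (lam j - γ) 0 = (n : ℝ))
    (Gstar : Matrix (Fin n) (Fin n) ℂ)
    (hGstar : Gstar = ∑ j ∈ Finset.univ.filter (fun j : Fin n => (j : ℕ) < d),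
      ((max (lam j - γ) 0 : ℝ) : ℂ) • Matrix.vecMulVec (u j) (star (u j))) :
    Gstar.PosSemidef ∧ Gstar.rank ≤ d ∧ Gstar.trace = (n : ℂ) ∧
      ∀ G : Matrix (Fin n) (Fin n) ℂ,
        G.PosSemidef → G.rank ≤ d → G.trace = (n : ℂ) →
        frobNorm (Gstar - H) ≤ frobNorm (G - H) :=
  nearest_spectral_constraint_general n d lam hlam u hu H hH γ hγ Gstar hGstar
end

section
/- Let n be a positive integer, and let 𝒢 and ℋ be nonempty compact subsets of ℂ^{n×n} (with the Frobenius norm). Let (G_t)_{t≥0} and (H_t)_{t≥0} be sequences such that G_0 ∈ 𝒢 and, for every t ≥ 0: H_t ∈ ℋ satisfies ‖H_t − G_t‖_F = min_{H ∈ ℋ} ‖H − G_t‖_F, and G_{t+1} ∈ 𝒢 satisfies ‖G_{t+1} − H_t‖_F = min_{G ∈ 𝒢} ‖G − H_t‖_F. Then: (i) the sequence of pairs (G_t, H_t) has at least one accumulation point, and every accumulation point lies in 𝒢 × ℋ; (ii) the real sequence ‖G_t − H_t‖_F converges; (iii) every accumulation point (Ḡ, H̄) satisfies ‖Ḡ −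 H̄‖_F = lim_{t→∞} ‖G_t − H_t‖_F; and (iv) every accumulation point (Ḡ, H̄) satisfies ‖Ḡ − H̄‖_F = dist(Ḡ, ℋ) = dist(H̄, 𝒢), where dist(M, 𝒞) = min_{C ∈ 𝒞} ‖M − C‖_F. -/
/-!
Each half-step of alternating projection replaces one end of the pair by a nearest point, so
`‖G_{t+1} - H_{t+1}‖ ≤ ‖G_{t+1} - H_t‖ ≤ ‖G_t - H_t‖`: the gap decreases, hence converges to some
`L`, and compactness yields convergent subsequences. At a limit pair `(Ḡ, H̄)` the gap is `L` by
continuity. The inequality `‖H_t - G_t‖ ≤ ‖H' - G_t‖` passes to the limit and makes `H̄` nearest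
to `Ḡ`; for the other side one passes to the limit in `L ≤ ‖G_{t+1} - H_{t+1}‖ ≤ ‖G' - H_t‖`.
Nothing but the metric enters, so this holds for alternating projection between compact sets of
any metric space.
-/

open scoped Matrix
open Filter

/-- The Frobenius distance from a matrix `M` to a collection `C` of matrices,
`dist(M, C) = inf_{C' ∈ C} ‖M − C'‖_F` (a minimum when `C` is compact and nonempty). -/
noncomputable def distToSet {n : ℕ} (M : Matrix (Fin n) (Fin n) ℂ)
    (C : Set (Matrix (Fin n) (Fin n) ℂ)) : ℝ :=
  sInf ((fun C' => frobNorm (M - C')) '' C)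

/-- `p` is an accumulation point of the sequence of pairs `(G_t, H_t)`: some
subsequence converges to `p`. -/
def IsAccumPair {n : ℕ} (G H : ℕ → Matrix (Fin n) (Fin n) ℂ)
    (p : Matrix (Fin n) (Fin n) ℂ × Matrix (Fin n) (Fin n) ℂ) : Prop :=
  ∃ φ : ℕ → ℕ, StrictMono φ ∧
    Tendsto (fun t => (G (φ t), H (φ t))) atTop (nhds p)

open Topology

section AlternatingProjection

variable {α : Type*} [PseudoMetricSpace α] {A B : Set α} {x y : ℕ → α} {φ : ℕ → ℕ} {a b : α}

theorem dist_eq_of_tendsto_subseq {L : ℝ} (hL : Tendsto (fun t => dist (x t) (y t)) atTop (𝓝 L))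
    (hφ : Tendsto φ atTop atTop) (hab : Tendsto (fun t => (x (φ t), y (φ t))) atTop (𝓝 (a, b))) :
    dist a b = L :=
  tendsto_nhds_unique (hab.fst_nhds.dist hab.snd_nhds) (hL.comp hφ)

structure IsAlternatingProjection (A B : Set α) (x y : ℕ → α) : Prop where
  x_zero_mem : x 0 ∈ A
  y_mem : ∀ t, y t ∈ B
  isMinOn_y : ∀ t, IsMinOn (dist (x t)) B (y t)
  x_succ_mem : ∀ t, x (t + 1) ∈ A
  isMinOn_x_succ : ∀ t, IsMinOn (dist (y t)) A (x (t + 1))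

namespace IsAlternatingProjection

theorem x_mem (h : IsAlternatingProjection A B x y) : ∀ t, x t ∈ A
  | 0 => h.x_zero_mem
  | t + 1 => h.x_succ_mem t

theorem dist_succ_le (h : IsAlternatingProjection A B x y) (t : ℕ) (ha : a ∈ A) :
    dist (x (t + 1)) (y (t + 1)) ≤ dist (y t) a :=
  calc dist (x (t + 1)) (y (t + 1)) ≤ dist (x (t + 1)) (y t) :=
        isMinOn_iff.1 (h.isMinOn_y (t + 1)) _ (h.y_mem t)
    _ = dist (y t) (x (t + 1)) := dist_comm _ _
    _ ≤ dist (y t) a := isMinOn_iff.1 (h.isMinOn_x_succ t) a ha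

theorem antitone_dist (h : IsAlternatingProjection A B x y) :
    Antitone fun t => dist (x t) (y t) :=
  antitone_nat_of_succ_le fun t => (h.dist_succ_le t (h.x_mem t)).trans_eq (dist_comm _ _)

theorem tendsto_dist (h : IsAlternatingProjection A B x y) :
    Tendsto (fun t => dist (x t) (y t)) atTop (𝓝 (⨅ t, dist (x t) (y t))) :=
  tendsto_atTop_ciInf h.antitone_dist ⟨0, by rintro _ ⟨t, rfl⟩; exact dist_nonneg⟩

theorem exists_tendsto_subseq (h : IsAlternatingProjection A B x y) (hA : IsCompact A)
    (hB : IsCompact B) :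
    ∃ p : α × α, ∃ φ : ℕ → ℕ, StrictMono φ ∧ Tendsto (fun t => (x (φ t), y (φ t))) atTop (𝓝 p) :=
  let ⟨p, _, φ, hφ, hp⟩ := (hA.prod hB).tendsto_subseq (x := fun t => (x t, y t))
    fun t => ⟨h.x_mem t, h.y_mem t⟩
  ⟨p, φ, hφ, hp⟩

theorem mem_of_tendsto_subseq (h : IsAlternatingProjection A B x y) (hA : IsClosed A)
    (hB : IsClosed B) (hab : Tendsto (fun t => (x (φ t), y (φ t))) atTop (𝓝 (a, b))) :
    a ∈ A ∧ b ∈ B :=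
  ⟨hA.mem_of_tendsto hab.fst_nhds (.of_forall fun t => h.x_mem (φ t)),
    hB.mem_of_tendsto hab.snd_nhds (.of_forall fun t => h.y_mem (φ t))⟩

theorem isMinOn_dist_fst_of_tendsto_subseq (h : IsAlternatingProjection A B x y)
    (hab : Tendsto (fun t => (x (φ t), y (φ t))) atTop (𝓝 (a, b))) : IsMinOn (dist a) B b :=
  isMinOn_iff.2 fun b' hb' =>
    le_of_tendsto_of_tendsto' (hab.fst_nhds.dist hab.snd_nhds)
      (hab.fst_nhds.dist tendsto_const_nhds) fun t => isMinOn_iff.1 (h.isMinOn_y (φ t)) b' hb'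

theorem isMinOn_dist_snd_of_tendsto_subseq (h : IsAlternatingProjection A B x y)
    (hφ : Tendsto φ atTop atTop) (hab : Tendsto (fun t => (x (φ t), y (φ t))) atTop (𝓝 (a, b))) :
    IsMinOn (dist b) A a := by
  refine isMinOn_iff.2 fun a' ha' => ?_
  rw [dist_comm b a, dist_eq_of_tendsto_subseq h.tendsto_dist hφ hab]
  refine ge_of_tendsto (hab.snd_nhds.dist tendsto_const_nhds) (.of_forall fun t => ?_)
  exact (h.antitone_dist.le_of_tendsto h.tendsto_dist (φ t + 1)).trans (h.dist_succ_le (φ t) ha')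

end IsAlternatingProjection

end AlternatingProjection

section Frobenius

attribute [local instance] Matrix.frobeniusNormedAddCommGroup

variable {m n : Type*} [Fintype m] [Fintype n]

theorem frobNorm_eq_norm (A : Matrix m n ℂ) : frobNorm A = ‖A‖ := by
  rw [Matrix.frobenius_norm_def, frobNorm, Real.sqrt_eq_rpow]
  norm_cast

theorem frobNorm_sub_eq_dist (A B : Matrix m n ℂ) : frobNorm (A - B) = dist A B := by
  rw [frobNorm_eq_norm, dist_eq_norm]

theorem isAlternatingProjection_of_frobNorm {𝒢 ℋ : Set (Matrix m n ℂ)} {G H : ℕ → Matrix m n ℂ}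
    (hG0 : G 0 ∈ 𝒢)
    (hHt : ∀ t, H t ∈ ℋ ∧ ∀ H' ∈ ℋ, frobNorm (H t - G t) ≤ frobNorm (H' - G t))
    (hGt : ∀ t, G (t + 1) ∈ 𝒢 ∧
      ∀ G' ∈ 𝒢, frobNorm (G (t + 1) - H t) ≤ frobNorm (G' - H t)) :
    IsAlternatingProjection 𝒢 ℋ G H where
  x_zero_mem := hG0
  y_mem t := (hHt t).1
  isMinOn_y t := isMinOn_iff.2 fun H' hH' => by
    simpa only [frobNorm_sub_eq_dist, dist_comm (G t)] using (hHt t).2 H' hH'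
  x_succ_mem t := (hGt t).1
  isMinOn_x_succ t := isMinOn_iff.2 fun G' hG' => by
    simpa only [frobNorm_sub_eq_dist, dist_comm (H t)] using (hGt t).2 G' hG'

theorem distToSet_eq_dist_of_isMinOn {n : ℕ} {M P : Matrix (Fin n) (Fin n) ℂ}
    {C : Set (Matrix (Fin n) (Fin n) ℂ)} (hP : P ∈ C) (hmin : IsMinOn (dist M) C P) :
    distToSet M C = dist M P := by
  simp only [distToSet, frobNorm_sub_eq_dist]
  exact IsLeast.csInf_eq ⟨Set.mem_image_of_mem _ hP, Set.forall_mem_image.2 (isMinOn_iff.1 hmin)⟩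

end Frobenius

theorem alternating_projection_global_convergence_general (n : ℕ)
    (𝒢 ℋ : Set (Matrix (Fin n) (Fin n) ℂ))
    (h𝒢c : IsCompact 𝒢) (hℋc : IsCompact ℋ)
    (G H : ℕ → Matrix (Fin n) (Fin n) ℂ)
    (hG0 : G 0 ∈ 𝒢)
    (hHt : ∀ t, H t ∈ ℋ ∧ ∀ H' ∈ ℋ, frobNorm (H t - G t) ≤ frobNorm (H' - G t))
    (hGt : ∀ t, G (t + 1) ∈ 𝒢 ∧
      ∀ G' ∈ 𝒢, frobNorm (G (t + 1) - H t) ≤ frobNorm (G' - H t)) :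
    (∃ p, IsAccumPair G H p) ∧
    (∀ Gbar Hbar, IsAccumPair G H (Gbar, Hbar) → Gbar ∈ 𝒢 ∧ Hbar ∈ ℋ) ∧
    (∃ L : ℝ, Tendsto (fun t => frobNorm (G t - H t)) atTop (nhds L) ∧
      ∀ Gbar Hbar, IsAccumPair G H (Gbar, Hbar) → frobNorm (Gbar - Hbar) = L) ∧
    (∀ Gbar Hbar, IsAccumPair G H (Gbar, Hbar) →
      frobNorm (Gbar - Hbar) = distToSet Gbar ℋ ∧ frobNorm (Gbar - Hbar) = distToSet Hbar 𝒢) := by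
  -- The Frobenius topology is definitionally the product topology used by `IsAccumPair`.
  let _ : NormedAddCommGroup (Matrix (Fin n) (Fin n) ℂ) := Matrix.frobeniusNormedAddCommGroup
  have hP := isAlternatingProjection_of_frobNorm hG0 hHt hGt
  have hmem : ∀ Gbar Hbar, IsAccumPair G H (Gbar, Hbar) → Gbar ∈ 𝒢 ∧ Hbar ∈ ℋ :=
    fun _ _ ⟨_, _, hlim⟩ => hP.mem_of_tendsto_subseq h𝒢c.isClosed hℋc.isClosed hlim
  have hL := hP.tendsto_dist
  refine ⟨hP.exists_tendsto_subseq h𝒢c hℋc, hmem,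
    ⟨⨅ t, dist (G t) (H t), by simpa only [frobNorm_sub_eq_dist] using hL, ?_⟩, ?_⟩
  · rintro Gbar Hbar ⟨φ, hφ, hlim⟩
    rw [frobNorm_sub_eq_dist]
    exact dist_eq_of_tendsto_subseq hL hφ.tendsto_atTop hlim
  · rintro Gbar Hbar ⟨φ, hφ, hlim⟩
    obtain ⟨hGbar, hHbar⟩ := hmem _ _ ⟨φ, hφ, hlim⟩
    rw [frobNorm_sub_eq_dist,
      distToSet_eq_dist_of_isMinOn hHbar (hP.isMinOn_dist_fst_of_tendsto_subseq hlim),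
      distToSet_eq_dist_of_isMinOn hGbar
        (hP.isMinOn_dist_snd_of_tendsto_subseq hφ.tendsto_atTop hlim)]
    exact ⟨rfl, dist_comm _ _⟩

/-- **Global convergence of alternating projection.**  Let `𝒢, ℋ` be nonempty compact
sets of `n × n` complex matrices and let `(G_t)`, `(H_t)` be alternating-projection
iterates: `G_0 ∈ 𝒢`, each `H_t` is a Frobenius-nearest point of `ℋ` to `G_t`, and each
`G_{t+1}` is a Frobenius-nearest point of `𝒢` to `H_t`.  Then (i) the sequence of pairs
`(G_t, H_t)` has an accumulation point, and every accumulation point lies in `𝒢 × ℋ`;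
(ii) `‖G_t − H_t‖_F` converges; (iii) every accumulation point `(Gbar, Hbar)` satisfies
`‖Gbar − Hbar‖_F = lim_t ‖G_t − H_t‖_F`; and (iv) every accumulation point `(Gbar, Hbar)`
satisfies `‖Gbar − Hbar‖_F = dist(Gbar, ℋ) = dist(Hbar, 𝒢)`. -/
theorem alternating_projection_global_convergence (n : ℕ) (hn : 0 < n)
    (𝒢 ℋ : Set (Matrix (Fin n) (Fin n) ℂ))
    (h𝒢c : IsCompact 𝒢) (h𝒢ne : 𝒢.Nonempty)
    (hℋc : IsCompact ℋ) (hℋne : ℋ.Nonempty)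
    (G H : ℕ → Matrix (Fin n) (Fin n) ℂ)
    (hG0 : G 0 ∈ 𝒢)
    (hHt : ∀ t, H t ∈ ℋ ∧ ∀ H' ∈ ℋ, frobNorm (H t - G t) ≤ frobNorm (H' - G t))
    (hGt : ∀ t, G (t + 1) ∈ 𝒢 ∧
      ∀ G' ∈ 𝒢, frobNorm (G (t + 1) - H t) ≤ frobNorm (G' - H t)) :
    (∃ p, IsAccumPair G H p) ∧
    (∀ Gbar Hbar, IsAccumPair G H (Gbar, Hbar) → Gbar ∈ 𝒢 ∧ Hbar ∈ ℋ) ∧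
    (∃ L : ℝ, Tendsto (fun t => frobNorm (G t - H t)) atTop (nhds L) ∧
      ∀ Gbar Hbar, IsAccumPair G H (Gbar, Hbar) → frobNorm (Gbar - Hbar) = L) ∧
    (∀ Gbar Hbar, IsAccumPair G H (Gbar, Hbar) →
      frobNorm (Gbar - Hbar) = distToSet Gbar ℋ ∧ frobNorm (Gbar - Hbar) = distToSet Hbar 𝒢) :=
  alternating_projection_global_convergence_general n 𝒢 ℋ h𝒢c hℋc G H hG0 hHt hGt
end
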